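/- arXiv:2206.07886 — 2 statements merged into one kernel-verified Lean document; each statement's English description precedes it below -/
import Mathlib

section
/- Let V_kᵀ ∈ ℝ^{k×d} have orthonormal rows, and for i ≥ 1 let Π_{i−1} be the orthogonal projection onto the orthogonal complement of span(v_{j₁},…,v_{j_{i−1}}) where v_j denotes column j of V_kᵀ. Define Z_i = Π_{i−1}V_kᵀ. Then ‖Z_i‖_F² ≥ k − i + 1, and hence the column of Z_i of maximal Euclidean norm has squared norm at least (k − i + 1)/d. -/
/-!
`‖P V‖_F² = tr(P V Vᵀ Pᵀ) = tr P` because `V Vᵀ = 1` and `P` is an orthogonal projection.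
The complementary projection `1 - P` kills every vector orthogonal to the `i - 1` chosen columns,
so its rank is at most `i - 1`; for an idempotent matrix trace equals rank, hence
`tr P = k - tr (1 - P) ≥ k - i + 1`. Averaging over the `d` columns gives the column bound.
-/

open Matrix

noncomputable def frobSq {m n : Type*} [Fintype m] [Fintype n] (A : Matrix m n ℝ) : ℝ :=
  ∑ i, ∑ j, (A i j) ^ 2

theorem Matrix.trace_eq_rank_of_isIdempotentElem {K n : Type*} [Field K] [Fintype n]
    [DecidableEq n] {A : Matrix n n K} (hA : IsIdempotentElem A) : A.trace = A.rank := by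
  have hproj : IsIdempotentElem A.mulVecLin := by
    rw [IsIdempotentElem, Module.End.mul_eq_comp, ← Matrix.mulVecLin_mul, hA.eq]
  rw [Matrix.rank, ← ((LinearMap.isProj_range_iff_isIdempotentElem _).2 hproj).trace,
    LinearMap.trace_eq_matrix_trace K (Pi.basisFun K n), LinearMap.toMatrix_eq_toMatrix']
  exact congrArg Matrix.trace (LinearMap.toMatrix'_toLin' A).symm

theorem Matrix.rank_le_rank_of_ker_le {K m n p : Type*} [Field K] [Fintype m] [Fintype n]
    [Fintype p] {A : Matrix m n K} {B : Matrix p n K}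
    (h : ∀ x, A *ᵥ x = 0 → B *ᵥ x = 0) : B.rank ≤ A.rank := by
  have hker : LinearMap.ker A.mulVecLin ≤ LinearMap.ker B.mulVecLin := h
  have hA := LinearMap.finrank_range_add_finrank_ker A.mulVecLin
  have hB := LinearMap.finrank_range_add_finrank_ker B.mulVecLin
  have := Submodule.finrank_mono hker
  unfold Matrix.rank
  omega

theorem Matrix.card_sub_card_le_trace_of_isIdempotentElem {K m n : Type*} [Field K] [LinearOrder K]
    [IsStrictOrderedRing K] [Fintype m] [Fintype n] [DecidableEq n] {P : Matrix n n K}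
    (hP : IsIdempotentElem P) (W : Matrix m n K) (hfix : ∀ x, W *ᵥ x = 0 → P *ᵥ x = x) :
    (Fintype.card n : K) - Fintype.card m ≤ P.trace := by
  have hrank : (1 - P).rank ≤ Fintype.card m :=
    (rank_le_rank_of_ker_le fun x hx => by rw [sub_mulVec, one_mulVec, hfix x hx, sub_self]).trans
      (rank_le_card_height W)
  have hQ := trace_eq_rank_of_isIdempotentElem hP.one_sub
  rw [trace_sub, trace_one] at hQ
  have hrank' : ((1 - P).rank : K) ≤ Fintype.card m := by exact_mod_cast hrank
  linarith

theorem frobSq_eq_trace_mul_transpose {m n : Type*} [Fintype m] [Fintype n]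
    (A : Matrix m n ℝ) : frobSq A = (A * Aᵀ).trace := by
  simp only [frobSq, trace, diag, mul_apply, transpose_apply, sq]

theorem frobSq_mul_eq_trace {m n : Type*} [Fintype m] [Fintype n] [DecidableEq m]
    {P : Matrix m m ℝ} (hP1 : P * P = P) (hP2 : Pᵀ = P) {V : Matrix m n ℝ} (hV : V * Vᵀ = 1) :
    frobSq (P * V) = P.trace := by
  rw [frobSq_eq_trace_mul_transpose, transpose_mul, hP2, ← Matrix.mul_assoc,
    Matrix.mul_assoc P, hV, Matrix.mul_one, hP1]

theorem exists_le_sum_sq_col_of_le_frobSq {m n : Type*} [Fintype m] [Fintype n]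
    {A : Matrix m n ℝ} {c : ℝ} (hc : c ≤ frobSq A) (hc0 : 0 < c) :
    ∃ j, c / Fintype.card n ≤ ∑ r, A r j ^ 2 := by
  have hn : Nonempty n := by
    by_contra h
    rw [not_nonempty_iff] at h
    simp only [frobSq, Finset.univ_eq_empty, Finset.sum_empty, Finset.sum_const_zero] at hc
    linarith
  have hsum : ∑ _j : n, c / Fintype.card n ≤ ∑ j, ∑ r, A r j ^ 2 := by
    rwa [Finset.sum_const, Finset.card_univ, nsmul_eq_mul, mul_div_cancel₀ _ (by positivity),
      Finset.sum_comm]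
  obtain ⟨j, -, hj⟩ := Finset.exists_le_of_sum_le Finset.univ_nonempty hsum
  exact ⟨j, hj⟩

theorem stmt11_general {k d : ℕ} (i : ℕ) (hi : 1 ≤ i) (hik : i ≤ k)
    (V : Matrix (Fin k) (Fin d) ℝ) (hV : V * Vᵀ = 1)
    (cols : Fin (i - 1) → Fin d)
    (P : Matrix (Fin k) (Fin k) ℝ) (hP1 : P * P = P) (hP2 : Pᵀ = P)
    (hfix : ∀ x : Fin k → ℝ, (∀ a, ∑ r, x r * V r (cols a) = 0) → P.mulVec x = x) :
    ((k : ℝ) - i + 1) ≤ frobSq (P * V) ∧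
      ∃ j : Fin d, ((k : ℝ) - i + 1) / d ≤ ∑ r, ((P * V) r j) ^ 2 := by
  have htrace := card_sub_card_le_trace_of_isIdempotentElem hP1 (V.submatrix id cols)ᵀ
    fun x hx => hfix x fun a => by simpa [mulVec, dotProduct, mul_comm] using congrFun hx a
  rw [Fintype.card_fin, Fintype.card_fin, Nat.cast_pred hi, sub_sub_eq_add_sub, add_sub_right_comm,
    ← frobSq_mul_eq_trace hP1 hP2 hV] at htrace
  have hk : (i : ℝ) ≤ k := by exact_mod_cast hik
  refine ⟨htrace, ?_⟩
  simpa only [Fintype.card_fin] using exists_le_sum_sq_col_of_le_frobSq htrace (by linarith)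

/-- If `Vₖᵀ` has orthonormal rows and `Π_{i−1}` is the orthogonal projection onto the
orthogonal complement of the span of `i−1` chosen columns of `Vₖᵀ`, then
`Zᵢ = Π_{i−1} Vₖᵀ` satisfies `‖Zᵢ‖_F² ≥ k − i + 1`, and hence some column of `Zᵢ`
has squared norm at least `(k − i + 1)/d`. -/
theorem stmt11 {k d : ℕ} (i : ℕ) (hi : 1 ≤ i) (hik : i ≤ k)
    (V : Matrix (Fin k) (Fin d) ℝ) (hV : V * Vᵀ = 1)
    (cols : Fin (i - 1) → Fin d)
    (P : Matrix (Fin k) (Fin k) ℝ) (hP1 : P * P = P) (hP2 : Pᵀ = P)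
    (hker : ∀ a, P.mulVec (fun r => V r (cols a)) = 0)
    (hfix : ∀ x : Fin k → ℝ, (∀ a, ∑ r, x r * V r (cols a) = 0) → P.mulVec x = x) :
    ((k : ℝ) - i + 1) ≤ frobSq (P * V) ∧
      ∃ j : Fin d, ((k : ℝ) - i + 1) / d ≤ ∑ r, ((P * V) r j) ^ 2 :=
  stmt11_general i hi hik V hV cols P hP1 hP2 hfix
end

section
/- Let A ∈ ℝ^{n×d}, S ∈ ℝ^{m×n}, set B = A(SA)†(SA), let U ∈ ℝ^{n×k} have as columns the top k left singular vectors of B, and let Z ∈ ℝ^{n×k} be any matrix. Then ‖A − ZZ†B‖_F² − ‖A − UUᵀB‖_F² = ‖B − ZZ†B‖_F² − ‖B − UUᵀB‖_F², i.e., the difference of losses against A equals the difference of projection errors against B. -/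
open Matrix

def IsMoorePenrose {m n : Type*} [Fintype m] [Fintype n]
    (A : Matrix m n ℝ) (B : Matrix n m ℝ) : Prop :=
  A * B * A = A ∧ B * A * B = B ∧ (A * B)ᵀ = A * B ∧ (B * A)ᵀ = B * A

def IsBestRankApprox {m n : Type*} [Fintype m] [Fintype n] (k : ℕ)
    (A M : Matrix m n ℝ) : Prop :=
  M.rank ≤ k ∧ ∀ N : Matrix m n ℝ, N.rank ≤ k → frobSq (A - M) ≤ frobSq (A - N)

lemma frobSq_eq_trace {m n : Type*} [Fintype m] [Fintype n] (A : Matrix m n ℝ) :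
    frobSq A = Matrix.trace (A * Aᵀ) := by
  simp [frobSq, Matrix.trace, Matrix.mul_apply, Matrix.diag, sq]

lemma pyth {n d : ℕ} (A : Matrix (Fin n) (Fin d) ℝ) (P : Matrix (Fin d) (Fin d) ℝ)
    (hP2 : P * P = P) (hPt : Pᵀ = P) (Q : Matrix (Fin n) (Fin n) ℝ) :
    frobSq (A - Q * (A * P)) = frobSq (A * P - Q * (A * P)) + frobSq (A - A * P) := by
  have hzero : (A - A * P) * (A * P - Q * (A * P))ᵀ = 0 := by
    have h1 : A * P * (P * Aᵀ) = A * P * Aᵀ := by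
      rw [← Matrix.mul_assoc (A * P) P Aᵀ, Matrix.mul_assoc A P P, hP2]
    have h2 : P * (P * (Aᵀ * Qᵀ)) = P * (Aᵀ * Qᵀ) := by
      rw [← Matrix.mul_assoc, hP2]
    simp only [Matrix.transpose_sub, Matrix.transpose_mul, hPt, Matrix.sub_mul,
      Matrix.mul_sub, Matrix.mul_assoc] at *
    rw [h1, h2]
    abel
  have key : A - Q * (A * P) = (A - A * P) + (A * P - Q * (A * P)) := by abel
  rw [key, frobSq_eq_trace, frobSq_eq_trace, frobSq_eq_trace]
  rw [Matrix.add_mul, Matrix.transpose_add, Matrix.mul_add, Matrix.mul_add, hzero]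
  have hzero' : (A * P - Q * (A * P)) * (A - A * P)ᵀ = 0 := by
    have := congrArg Matrix.transpose hzero
    simpa [Matrix.transpose_mul] using this
  rw [hzero']
  simp [Matrix.trace_add]
  ring

/-- For `B = A(SA)†(SA)`, `U` the top-k left singular vectors of `B`
(so `U` has orthonormal columns and `UUᵀB = [B]ₖ`), and any `Z ∈ ℝ^{n×k}`:
`‖A − ZZ†B‖_F² − ‖A − UUᵀB‖_F² = ‖B − ZZ†B‖_F² − ‖B − UUᵀB‖_F²`. -/
theorem stmt18 {n d m k : ℕ}
    (A : Matrix (Fin n) (Fin d) ℝ) (S : Matrix (Fin m) (Fin n) ℝ)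
    (G : Matrix (Fin d) (Fin m) ℝ) (hG : IsMoorePenrose (S * A) G)
    (B : Matrix (Fin n) (Fin d) ℝ) (hB : B = A * (G * (S * A)))
    (U : Matrix (Fin n) (Fin k) ℝ) (hU : Uᵀ * U = 1)
    (hUk : IsBestRankApprox k B (U * Uᵀ * B))
    (Z : Matrix (Fin n) (Fin k) ℝ) (GZ : Matrix (Fin k) (Fin n) ℝ)
    (hGZ : IsMoorePenrose Z GZ) :
    frobSq (A - Z * GZ * B) - frobSq (A - U * Uᵀ * B)
      = frobSq (B - Z * GZ * B) - frobSq (B - U * Uᵀ * B) := by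
  set P : Matrix (Fin d) (Fin d) ℝ := G * (S * A) with hP
  have hP2 : P * P = P := by
    have h := hG.2.1
    calc P * P = G * (S * A) * G * (S * A) := by
          simp only [hP, Matrix.mul_assoc]
      _ = G * (S * A) := by rw [h]
      _ = P := rfl
  have hPt : Pᵀ = P := hG.2.2.2
  have hBP : B = A * P := hB
  have h1 := pyth A P hP2 hPt (Z * GZ)
  have h2 := pyth A P hP2 hPt (U * Uᵀ)
  rw [hBP]
  linarith [h1, h2]
end
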